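/- arXiv:1504.05056 — 4 statements merged into one kernel-verified Lean document; each statement's English description precedes it below -/
import Mathlib

section
/- Suppose the set P of allowed objects is unrestricted (contains all objects and is closed under tensor products). Then a function W satisfies both cyclicity axioms if and only if W(p→q) = M(q) - M(p) for some M with M(∅) = 0 that is monotone under catalytic free transitions and additive under tensor products: M(p⊗q) = M(p) + M(q). -/
/-- In the unrestricted case (all objects allowed), a function `W`
satisfies both cyclicity axioms (Axiom 1: sums of work over cyclic sequences of the
work-storage device are `≥ 0`; Axiom 2: sums of work over collections of transitions
assisted by catalysts `(c k, c (k+1))` with `c n = c 0` are `≤ 0`) if and only if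
`W p q = M q - M p` for some `M` with `M ∅ = 0` that is monotone under catalytic free
transitions and additive under tensor products. Objects form a commutative monoid under
the tensor product `*` with unit `∅ = 1`; the free image `F` is reflexive, composable,
extends to larger systems, and admits partial tracing. -/
theorem work_quantifier_unrestricted_iff {α : Type*} [CommMonoid α]
    (F : α → α → Prop)
    (hrefl : ∀ p : α, F p p)
    (htrans : ∀ p q r : α, F p q → F q r → F p r)
    (hext : ∀ p q r : α, F p q → F (p * r) (q * r))
    (htrace : ∀ p q : α, F (p * q) p)
    (W : α → α → ℝ) :
    ((∀ (n : ℕ) (p : ℕ → α), p n = p 0 →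
        0 ≤ ∑ i ∈ Finset.range n, W (p i) (p (i + 1))) ∧
      (∀ (n : ℕ) (p q c : ℕ → α), c n = c 0 →
        (∀ k < n, F (p k * c k) (q k * c (k + 1))) →
        ∑ k ∈ Finset.range n, W (p k) (q k) ≤ 0)) ↔
    ∃ M : α → ℝ, M 1 = 0 ∧
      (∀ p q : α, (∃ c, F (p * c) (q * c)) → M q ≤ M p) ∧
      (∀ p q : α, M (p * q) = M p + M q) ∧
      (∀ p q : α, W p q = M q - M p) := by
  constructor
  · rintro ⟨A1, A2⟩
    -- single-transition consequence of Axiom 2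
    have one : ∀ p q c : α, F (p * c) (q * c) → W p q ≤ 0 := by
      intro p q c h
      have := A2 1 (fun _ => p) (fun _ => q) (fun _ => c) rfl
        (by intro k hk; exact h)
      simpa using this
    -- two transitions assisted by a catalyst pair, with equalities
    have two : ∀ a a' b b' x0 x1 : α, a * x0 = a' * x1 → b * x1 = b' * x0 →
        W a a' + W b b' ≤ 0 := by
      intro a a' b b' x0 x1 h1 h2
      have := A2 2 (fun k => if k = 0 then a else b)
        (fun k => if k = 0 then a' else b')
        (fun k => if k = 0 then x0 else if k = 1 then x1 else x0) rfl
        (by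
          intro k hk
          interval_cases k
          · simpa using (h1 ▸ hrefl (a' * x1))
          · simpa using (h2 ▸ hrefl (b' * x0)))
      simpa [Finset.sum_range_succ] using this
    -- three transitions
    have three : ∀ a a' b b' c c' x0 x1 x2 : α, a * x0 = a' * x1 →
        b * x1 = b' * x2 → c * x2 = c' * x0 →
        W a a' + W b b' + W c c' ≤ 0 := by
      intro a a' b b' c c' x0 x1 x2 h1 h2 h3
      have := A2 3 (fun k => if k = 0 then a else if k = 1 then b else c)
        (fun k => if k = 0 then a' else if k = 1 then b' else c')
        (fun k => if k = 0 then x0 else if k = 1 then x1 else if k = 2 then x2 else x0)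
        rfl
        (by
          intro k hk
          interval_cases k
          · simpa using (h1 ▸ hrefl (a' * x1))
          · simpa using (h2 ▸ hrefl (b' * x2))
          · simpa using (h3 ▸ hrefl (c' * x0)))
      simpa [Finset.sum_range_succ, add_assoc] using this
    -- cyclic lower bounds from Axiom 1
    have cyc2 : ∀ a b : α, 0 ≤ W a b + W b a := by
      intro a b
      have := A1 2 (fun k => if k = 0 then a else if k = 1 then b else a) rfl
      simpa [Finset.sum_range_succ] using this
    have cyc3 : ∀ a b c : α, 0 ≤ W a b + W b c + W c a := by
      intro a b c
      have := A1 3 (fun k => if k = 0 then a else if k = 1 then b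
        else if k = 2 then c else a) rfl
      simpa [Finset.sum_range_succ, add_assoc] using this
    -- antisymmetry
    have anti : ∀ a b : α, W a b + W b a = 0 := by
      intro a b
      have h1 := two a b b a b a (mul_comm a b) (mul_comm b a)
      linarith [cyc2 a b]
    have chain : ∀ a b c : α, W a b + W b c + W c a = 0 := by
      intro a b c
      have h1 := three a b b c c a (b * c) (a * c) (a * b)
        (by simp [mul_comm, mul_left_comm, mul_assoc])
        (by simp [mul_comm, mul_left_comm, mul_assoc])
        (by simp [mul_comm, mul_left_comm, mul_assoc])
      linarith [cyc3 a b c]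
    refine ⟨fun p => W 1 p, ?_, ?_, ?_, ?_⟩
    · have := anti 1 1; linarith
    · intro p q ⟨c, hc⟩
      have hW := one p q c hc
      have h := chain 1 p q
      have h2 := anti q 1
      linarith
    · intro p q
      have hle : W 1 p + W 1 q + W (p * q) 1 ≤ 0 :=
        three 1 p 1 q (p * q) 1 (p * q) q 1
          (by rw [one_mul]) (by rw [one_mul, mul_one]) (by rw [mul_one, one_mul])
      have hge : W 1 (p * q) + W p 1 + W q 1 ≤ 0 :=
        three 1 (p * q) p 1 q 1 (p * q) 1 p
          (by rw [one_mul, mul_one]) (by rw [mul_one, one_mul])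
          (by rw [one_mul, mul_comm q p])
      have a1 := anti 1 (p * q)
      have a2 := anti 1 p
      have a3 := anti 1 q
      linarith
    · intro p q
      have h := chain 1 p q
      have h2 := anti q 1
      linarith
  · rintro ⟨M, hM1, hmono, hadd, hW⟩
    constructor
    · intro n p hcyc
      have : ∑ i ∈ Finset.range n, W (p i) (p (i + 1))
          = ∑ i ∈ Finset.range n, (M (p (i + 1)) - M (p i)) := by
        refine Finset.sum_congr rfl fun i _ => hW _ _
      rw [this, Finset.sum_range_sub (fun i => M (p i)), hcyc]
      simp
    · intro n p q c hcyc hF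
      have key : ∀ k ∈ Finset.range n,
          W (p k) (q k) ≤ M (c k) - M (c (k + 1)) := by
        intro k hk
        rw [Finset.mem_range] at hk
        have h := hmono (p k * c k) (q k * c (k + 1))
          ⟨1, by simpa using hF k hk⟩
        rw [hadd, hadd] at h
        rw [hW]
        linarith
      calc ∑ k ∈ Finset.range n, W (p k) (q k)
          ≤ ∑ k ∈ Finset.range n, (M (c k) - M (c (k + 1))) :=
            Finset.sum_le_sum key
        _ = -(M (c n) - M (c 0)) := by
            rw [← Finset.sum_range_sub (fun k => M (c k))]
            rw [← Finset.sum_neg_distrib]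
            exact Finset.sum_congr rfl fun i _ => by ring
        _ = 0 := by rw [hcyc]; ring
end

section
/- Given a work quantifier of the form W(p→q) = M(q) − M(p) with M monotone under catalytic free transitions, the second law W_value(p) ≤ W_cost(p) holds, where W_value(p) is the supremum of W(p_A^(i) → p_A^(f)) over catalytic free transitions p ⊗ p_A^(i) → ω ⊗ p_A^(f) (ω a free/Gibbs object), and W_cost(p) is minus the supremum of W(p_A^(i) → p_A^(f)) over catalytic free transitions ω ⊗ p_A^(i) → p ⊗ p_A^(f). -/
/-- Second law: for a work quantifier `W (p→q) = M q - M p` with `M`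
additive, monotone under catalytic free transitions, and vanishing on free (Gibbs)
objects, the extractable work `W_value p` (supremum of work over catalytic free
transitions `p ⊗ pᵢ → ω ⊗ p_f` with `pᵢ, p_f` allowed work-storage objects in `P` and
`ω` free) is at most the work cost `W_cost p` (minus the supremum of work over catalytic
free transitions `ω ⊗ pᵢ → p ⊗ p_f`). -/
theorem second_law {α : Type*} [CommMonoid α]
    (F : α → α → Prop) (Free P : Set α) (M : α → ℝ)
    (hadd : ∀ p q : α, M (p * q) = M p + M q)
    (hmono : ∀ p q : α, (∃ c, F (p * c) (q * c)) → M q ≤ M p)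
    (hfree : ∀ ω ∈ Free, M ω = 0)
    (p : α)
    (hV : {w : ℝ | ∃ pi ∈ P, ∃ pf ∈ P, ∃ ω ∈ Free,
      (∃ c, F (p * pi * c) (ω * pf * c)) ∧ w = M pf - M pi}.Nonempty)
    (hC : {w : ℝ | ∃ pi ∈ P, ∃ pf ∈ P, ∃ ω ∈ Free,
      (∃ c, F (ω * pi * c) (p * pf * c)) ∧ w = M pf - M pi}.Nonempty) :
    sSup {w : ℝ | ∃ pi ∈ P, ∃ pf ∈ P, ∃ ω ∈ Free,
        (∃ c, F (p * pi * c) (ω * pf * c)) ∧ w = M pf - M pi}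
      ≤ -sSup {w : ℝ | ∃ pi ∈ P, ∃ pf ∈ P, ∃ ω ∈ Free,
        (∃ c, F (ω * pi * c) (p * pf * c)) ∧ w = M pf - M pi} := by
  have key1 : ∀ w ∈ {w : ℝ | ∃ pi ∈ P, ∃ pf ∈ P, ∃ ω ∈ Free,
      (∃ c, F (p * pi * c) (ω * pf * c)) ∧ w = M pf - M pi}, w ≤ M p := by
    rintro w ⟨pi, _, pf, _, ω, hω, hF, rfl⟩
    have h := hmono (p * pi) (ω * pf) hF
    rw [hadd, hadd, hfree ω hω] at h
    linarith
  have key2 : ∀ w ∈ {w : ℝ | ∃ pi ∈ P, ∃ pf ∈ P, ∃ ω ∈ Free,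
      (∃ c, F (ω * pi * c) (p * pf * c)) ∧ w = M pf - M pi}, w ≤ -M p := by
    rintro w ⟨pi, _, pf, _, ω, hω, hF, rfl⟩
    have h := hmono (ω * pi) (p * pf) hF
    rw [hadd, hadd, hfree ω hω] at h
    linarith
  have h1 := csSup_le hV key1
  have h2 := csSup_le hC key2
  linarith
end

section
/- Composition of assisted transitions (mapping time to space): if p → p' is a free transition assisted by catalyst pair (c, c') (i.e., p⊗c → p'⊗c' is free) and q → q' is assisted by (c', c''), then p⊗q → p'⊗q' is a free transition assisted by (c, c''). -/
/-- Composition of assisted transitions ("mapping time to space"):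
if `p → p'` is assisted by the catalyst pair `(c, c')` (i.e. `p ⊗ c → p' ⊗ c'` is a free
transition) and `q → q'` is assisted by `(c', c'')`, then `p ⊗ q → p' ⊗ q'` is assisted
by `(c, c'')`. Free transitions are transitive and extend to larger product systems. -/
theorem assisted_transitions_compose {α : Type*} [CommMonoid α]
    (F : α → α → Prop)
    (htrans : ∀ a b c : α, F a b → F b c → F a c)
    (hext : ∀ a b r : α, F a b → F (a * r) (b * r))
    (p p' q q' c c' c'' : α)
    (h1 : F (p * c) (p' * c'))
    (h2 : F (q * c') (q' * c'')) :
    F (p * q * c) (p' * q' * c'') := by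
  have h1' := hext _ _ q h1
  have h2' := hext _ _ p' h2
  rw [show p * c * q = p * q * c by ac_rfl, show p' * c' * q = q * c' * p' by ac_rfl] at h1'
  rw [show q' * c'' * p' = p' * q' * c'' by ac_rfl] at h2'
  exact htrans _ _ _ h1' h2'
end

section
/- For every n-fold cyclic sequence of objects p_1 → p_2 → ... → p_n = p_1, the sequence is a free sequence, i.e., each transition p_i → p_{i+1} is assisted by catalysts (c_i, c_{i+1}) with c_1 = c_n: explicitly, the catalyst c = p_2 ⊗ p_3 ⊗ ... ⊗ p_{n−1} allows the whole cycle to be traversed using only swap operations, returning the catalyst to its initial state. -/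
/-- Every cyclic sequence of objects `p 0 → p 1 → ... → p n = p 0` is a
free sequence: there are catalysts `c i` with `c n = c 0` (explicitly, built from the
tensor product of the other members of the cycle) such that each transition
`p i → p (i+1)` is assisted by `(c i, c (i+1))`, using only swap operations — in a
commutative monoid of objects the required free transitions are reflexivity instances. -/
theorem cyclic_sequences_are_free {α : Type*} [CommMonoid α]
    (F : α → α → Prop)
    (hrefl : ∀ a : α, F a a)
    (htrans : ∀ a b c : α, F a b → F b c → F a c) :
    ∀ (n : ℕ) (p : ℕ → α), p n = p 0 →
      ∃ c : ℕ → α, c n = c 0 ∧ ∀ i < n, F (p i * c i) (p (i + 1) * c (i + 1)) := by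
  intro n p hp
  refine ⟨fun i => ∏ j ∈ (Finset.range n).erase (i % n), p j, by simp, ?_⟩
  intro i hi
  have hfull : ∀ m ∈ Finset.range n,
      p m * ∏ j ∈ (Finset.range n).erase m, p j = ∏ j ∈ Finset.range n, p j :=
    fun m hm => Finset.mul_prod_erase _ _ hm
  have hn : 0 < n := Nat.pos_of_ne_zero (by omega)
  have h1 : p i * ∏ j ∈ (Finset.range n).erase (i % n), p j = ∏ j ∈ Finset.range n, p j := by
    rw [Nat.mod_eq_of_lt hi]; exact hfull i (Finset.mem_range.mpr hi)
  have h2 : p (i + 1) * ∏ j ∈ (Finset.range n).erase ((i + 1) % n), p j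
      = ∏ j ∈ Finset.range n, p j := by
    have hp' : p (i + 1) = p ((i + 1) % n) := by
      rcases Nat.lt_or_ge (i + 1) n with h | h
      · rw [Nat.mod_eq_of_lt h]
      · have : i + 1 = n := le_antisymm hi h
        rw [this, Nat.mod_self, hp]
    rw [hp']
    exact hfull _ (Finset.mem_range.mpr (Nat.mod_lt _ hn))
  rw [h1, h2]
  exact hrefl _
end
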